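/- arXiv:1804.02517 — 5 statements merged into one kernel-verified Lean document; each statement's English description precedes it below -/
import Mathlib

section
/- Let X be a Peano continuum having a free arc and let A be a free arc of X with endpoints a and b. Suppose x, y ∈ A satisfy a ≺ x ≺ y ≺ b with respect to a natural ordering ≺ on A. Let ε = min{diam([a,x]_A), diam([y,b]_A)}, and let δ = δ(ε) ∈ (0, ε/2] be such that any two points of X at positive distance at most δ are joined by an arc of diameter less than ε. Then d([x,y]_A, X ∖ (a,b)_A) > δ. -/
open Set Metric Topology

/-- The whole space `X` is an arc, i.e. homeomorphic to `[0,1]`. -/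
def SpaceIsArc (X : Type*) [TopologicalSpace X] : Prop :=
  Nonempty (X ≃ₜ Set.Icc (0:ℝ) 1)

/-- The whole space `X` is a circle, i.e. homeomorphic to the unit circle in `ℂ`. -/
def SpaceIsCircle (X : Type*) [TopologicalSpace X] : Prop :=
  Nonempty (X ≃ₜ Metric.sphere (0:ℂ) 1)

/-- A subset `A` is an arc: with the subspace topology it is homeomorphic to `[0,1]`. -/
def IsArc {X : Type*} [TopologicalSpace X] (A : Set X) : Prop :=
  Nonempty (A ≃ₜ Set.Icc (0:ℝ) 1)

/-- A subset `A` is a circle: with the subspace topology it is homeomorphic to `S¹`. -/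
def IsCircleSet {X : Type*} [TopologicalSpace X] (A : Set X) : Prop :=
  Nonempty (A ≃ₜ Metric.sphere (0:ℂ) 1)

/-- `A` is an arc with endpoints `a` and `b`: it is the image of a continuous
injective parametrization of `[0,1]` with `γ 0 = a` and `γ 1 = b`. -/
def IsArcEnds {X : Type*} [TopologicalSpace X] (A : Set X) (a b : X) : Prop :=
  ∃ γ : ℝ → X, ContinuousOn γ (Set.Icc 0 1) ∧ Set.InjOn γ (Set.Icc 0 1) ∧
    γ '' Set.Icc 0 1 = A ∧ γ 0 = a ∧ γ 1 = b

/-- A free open interval: an open subset homeomorphic to `(0,1)`. -/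
def IsFreeOpenInterval {X : Type*} [TopologicalSpace X] (J : Set X) : Prop :=
  IsOpen J ∧ Nonempty (J ≃ₜ Set.Ioo (0:ℝ) 1)

/-- A free arc: the closure of a free open interval, homeomorphic to `[0,1]`. -/
def IsFreeArc {X : Type*} [TopologicalSpace X] (A : Set X) : Prop :=
  ∃ J : Set X, IsFreeOpenInterval J ∧ A = closure J ∧ IsArc A

/-- A maximal free open interval: no free open interval properly contains it. -/
def IsMaxFreeOpenInterval {X : Type*} [TopologicalSpace X] (J : Set X) : Prop :=
  IsFreeOpenInterval J ∧ ∀ K : Set X, IsFreeOpenInterval K → J ⊆ K → J = K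

/-- `x` is an endpoint of the space `X`: every open set containing `x` contains an
open neighborhood of `x` whose boundary is a single point. -/
def IsEndpointOf (X : Type*) [TopologicalSpace X] (x : X) : Prop :=
  ∀ U : Set X, IsOpen U → x ∈ U → ∃ V : Set X, IsOpen V ∧ x ∈ V ∧ V ⊆ U ∧
    ∃ y : X, frontier V = {y}

/-- A maximal free open interval of Type I: its closure is an arc `J ∪ {a,b}` with
`a, b ∉ J` and at least one of `a, b` an endpoint of `X`. -/
def IsTypeI {X : Type*} [TopologicalSpace X] (J : Set X) : Prop :=
  IsMaxFreeOpenInterval J ∧ ∃ a b : X, a ≠ b ∧ a ∉ J ∧ b ∉ J ∧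
    closure J = J ∪ {a, b} ∧ IsArcEnds (closure J) a b ∧
    (IsEndpointOf X a ∨ IsEndpointOf X b)

/-- The model simple triod in the complex plane: three unit segments from the
origin in directions `π/3`, `π`, `5π/3`. -/
noncomputable def triodModel : Set ℂ :=
  ⋃ θ ∈ ({Real.pi / 3, Real.pi, 5 * Real.pi / 3} : Set ℝ),
    (fun r : ℝ => (r : ℂ) * Complex.exp (θ * Complex.I)) '' Set.Icc (0:ℝ) 1

/-- `A` is a simple triod. -/
def IsSimpleTriod {X : Type*} [TopologicalSpace X] (A : Set X) : Prop :=
  Nonempty (A ≃ₜ triodModel)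

/-- `U` contains no simple triod. -/
def ContainsNoTriod {X : Type*} [TopologicalSpace X] (U : Set X) : Prop :=
  ∀ A : Set X, A ⊆ U → ¬ IsSimpleTriod A

/-- The distance between two subsets of a metric space:
`d(S,T) = inf { dist s t | s ∈ S, t ∈ T }`. -/
noncomputable def setDist {X : Type*} [MetricSpace X] (S T : Set X) : ℝ :=
  sInf (Set.image2 dist S T)

/-!
The free open interval `J` with `closure J = A` is connected, open and dense in `A`, so it
contains `(a, b)_A`, which is therefore open in `X`. Now let `B` be an arc from a point of
`[x, y]_A` to a point off `(a, b)_A`. If `B` missed a point `γ v` of `(a, x]_A` and a point `γ w`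
of `[y, b)_A`, the open set `γ '' (v, w)` and the complement of `γ '' [v, w]` would disconnect
`B`. So `B` contains `(a, x]_A` or `[y, b)_A`, whence `diam B ≥ ε`; by the choice of `δ` no two
points of the two compact sets are within `δ` of each other, and the infimum is attained.
-/

theorem IsPreconnected.Ioo_subset_of_mem_closure {α : Type*} [LinearOrder α] [TopologicalSpace α]
    [OrderClosedTopology α] {s : Set α} {a b : α} (hs : IsPreconnected s) (ha : a ∈ closure s)
    (hb : b ∈ closure s) : Ioo a b ⊆ s := by
  rintro r ⟨har, hrb⟩
  obtain ⟨p, hpr, hp⟩ := _root_.mem_closure_iff.1 ha (Iio r) isOpen_Iio har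
  obtain ⟨q, hrq, hq⟩ := _root_.mem_closure_iff.1 hb (Ioi r) isOpen_Ioi hrb
  exact hs.Icc_subset hp hq ⟨hpr.le, hrq.le⟩

theorem IsPreconnected.apply_mem_or_apply_mem_of_image_Icc {α X : Type*} [LinearOrder α]
    [TopologicalSpace X] {γ : α → X} {v w : α} {B : Set X} (hB : IsPreconnected B)
    (hW : IsOpen (γ '' Ioo v w)) (hK : IsClosed (γ '' Icc v w)) {p q : X}
    (hp : p ∈ B ∩ γ '' Icc v w) (hq : q ∈ B \ γ '' Icc v w) :
    γ v ∈ B ∨ γ w ∈ B := by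
  by_contra! ⟨hv, hw⟩
  have hcover : B ⊆ γ '' Ioo v w ∪ (γ '' Icc v w)ᶜ := by
    rintro z hz
    by_cases hzK : z ∈ γ '' Icc v w
    · obtain ⟨m, ⟨hvm, hmw⟩, rfl⟩ := hzK
      refine Or.inl ⟨m, ⟨hvm.lt_of_ne ?_, hmw.lt_of_ne ?_⟩, rfl⟩ <;> rintro rfl
      exacts [hv hz, hw hz]
    · exact Or.inr hzK
  have hdisj : Disjoint (γ '' Ioo v w) (γ '' Icc v w)ᶜ :=
    disjoint_compl_right.mono_left (image_mono Ioo_subset_Icc_self)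
  rcases hB.subset_or_subset hW hK.isOpen_compl hdisj hcover with h | h
  · exact hq.2 (image_mono Ioo_subset_Icc_self (h hq.1))
  · exact h hp.1 hp.2

theorem Metric.diam_image_closure_le {α X : Type*} [TopologicalSpace α] [PseudoMetricSpace X]
    {f : α → X} {s : Set α} {B : Set X} (hf : ContinuousOn f (closure s)) (hsB : f '' s ⊆ B)
    (hB : Bornology.IsBounded B) : Metric.diam (f '' closure s) ≤ Metric.diam B :=
  calc Metric.diam (f '' closure s) ≤ Metric.diam (closure (f '' s)) :=
        Metric.diam_mono hf.image_closure (hB.subset hsB).closure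
    _ = Metric.diam (f '' s) := Metric.diam_closure _
    _ ≤ Metric.diam B := Metric.diam_mono hsB hB

theorem lt_setDist_of_forall_lt {X : Type*} [MetricSpace X] {K C : Set X} {δ : ℝ}
    (hK : IsCompact K) (hC : IsCompact C) (hKne : K.Nonempty) (hCne : C.Nonempty)
    (h : ∀ p ∈ K, ∀ q ∈ C, δ < dist p q) : δ < setDist K C := by
  have hcpt : IsCompact (image2 dist K C) := by
    rw [← image_prod]
    exact (hK.prod hC).image continuous_dist
  obtain ⟨p, hp, q, hq, hpq⟩ := hcpt.sInf_mem (hKne.image2 hCne)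
  rw [setDist, ← hpq]
  exact h p hp q hq

section Arc

variable {X : Type*} [MetricSpace X] {γ : ℝ → X} {a b : ℝ}

theorem image_Ioo_subset_of_isPreconnected (hγc : ContinuousOn γ (Icc a b))
    (hγi : InjOn γ (Icc a b)) {J : Set X} (hJ : IsPreconnected J) (hJA : J ⊆ γ '' Icc a b)
    (hAJ : γ '' Icc a b ⊆ closure J) : γ '' Ioo a b ⊆ J := by
  set e := (Icc a b).domRestrict γ
  have he : IsClosedEmbedding e := hγc.domRestrict.isClosedEmbedding hγi.injective
  have hJe : e '' (e ⁻¹' J) = J := image_preimage_eq_of_subset (by rwa [range_domRestrict])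
  have hS : IsPreconnected (Subtype.val '' (e ⁻¹' J)) :=
    (he.isInducing.isPreconnected_image.1 (by rwa [hJe])).image _
      continuous_subtype_val.continuousOn
  have hcl : ∀ x ∈ Icc a b, x ∈ closure (Subtype.val '' (e ⁻¹' J)) := fun x hx => by
    refine (closure_subtype (x := (⟨x, hx⟩ : Icc a b))).1 ?_
    rw [he.isInducing.closure_eq_preimage_closure_image, hJe]
    exact hAJ ⟨x, hx, rfl⟩
  rintro _ ⟨r, hr, rfl⟩
  have hab : a ≤ b := (hr.1.trans hr.2).le
  obtain ⟨x, hx, rfl⟩ :=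
    hS.Ioo_subset_of_mem_closure (hcl a (left_mem_Icc.2 hab)) (hcl b (right_mem_Icc.2 hab)) hr
  exact hx

theorem isOpen_image_Ioo_of_isFreeArc (hγc : ContinuousOn γ (Icc a b)) (hγi : InjOn γ (Icc a b))
    (hA : IsFreeArc (γ '' Icc a b)) : IsOpen (γ '' Ioo a b) := by
  obtain ⟨J, ⟨hJo, ⟨h⟩⟩, hAJ, -⟩ := hA
  have hJ : IsPreconnected J := by
    have : PreconnectedSpace (Ioo (0:ℝ) 1) := Subtype.preconnectedSpace isPreconnected_Ioo
    simpa using isPreconnected_range (continuous_subtype_val.comp h.symm.continuous)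
  have hJA : J ⊆ γ '' Icc a b := hAJ ▸ subset_closure
  have hV : γ '' Ioo a b = γ '' Icc a b \ γ '' (Icc a b ∩ {a, b}) := by
    rw [← Icc_sdiff_both, hγi.image_sdiff]
  have hVJ : γ '' Ioo a b = J \ γ '' (Icc a b ∩ {a, b}) := by
    refine Subset.antisymm (fun z hz => ?_) (hV ▸ sdiff_subset_sdiff_left hJA)
    exact ⟨image_Ioo_subset_of_isPreconnected hγc hγi hJ hJA hAJ.le hz, (hV ▸ hz).2⟩
  rw [hVJ]
  exact hJo.sdiff (toFinite _).isClosed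

theorem isOpen_image_of_subset_Ioo (hγc : ContinuousOn γ (Icc a b)) (hγi : InjOn γ (Icc a b))
    (hV : IsOpen (γ '' Ioo a b)) {U : Set ℝ} (hU : IsOpen U) (hUab : U ⊆ Ioo a b) :
    IsOpen (γ '' U) := by
  have hK : IsCompact (γ '' (Icc a b \ U)) :=
    (isCompact_Icc.diff hU).image_of_continuousOn (hγc.mono sdiff_subset)
  have hU' : γ '' U = γ '' Ioo a b ∩ (γ '' (Icc a b \ U))ᶜ := by
    ext z
    constructor
    · rintro ⟨m, hm, rfl⟩
      refine ⟨⟨m, hUab hm, rfl⟩, fun ⟨m', hm', he⟩ => hm'.2 ?_⟩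
      rwa [hγi hm'.1 (Ioo_subset_Icc_self (hUab hm)) he]
    · rintro ⟨⟨m, hm, rfl⟩, hmK⟩
      by_contra hmU
      exact hmK ⟨m, ⟨Ioo_subset_Icc_self hm, fun h => hmU ⟨m, h, rfl⟩⟩, rfl⟩
  rw [hU']
  exact hV.inter hK.isClosed.isOpen_compl

theorem min_diam_image_Icc_le_diam (hγc : ContinuousOn γ (Icc a b)) (hγi : InjOn γ (Icc a b))
    (hV : IsOpen (γ '' Ioo a b)) {s t u : ℝ} (has : a < s) (htb : t < b) (hu : u ∈ Icc s t)
    {B : Set X} (hB : IsPreconnected B) (hBb : Bornology.IsBounded B) (hpB : γ u ∈ B) {q : X}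
    (hqB : q ∈ B) (hq : q ∉ γ '' Ioo a b) :
    min (Metric.diam (γ '' Icc a s)) (Metric.diam (γ '' Icc t b)) ≤ Metric.diam B := by
  have hst : s ≤ t := hu.1.trans hu.2
  have hγas : ContinuousOn γ (Icc a s) := hγc.mono (Icc_subset_Icc_right (hst.trans htb.le))
  have hγtb : ContinuousOn γ (Icc t b) := hγc.mono (Icc_subset_Icc_left (has.le.trans hst))
  by_cases hl : γ '' Ioc a s ⊆ B
  · refine min_le_of_left_le ?_
    rw [← closure_Ioc has.ne] at hγas ⊢
    exact Metric.diam_image_closure_le hγas hl hBb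
  by_cases hr : γ '' Ico t b ⊆ B
  · refine min_le_of_right_le ?_
    rw [← closure_Ico htb.ne] at hγtb ⊢
    exact Metric.diam_image_closure_le hγtb hr hBb
  exfalso
  obtain ⟨_, ⟨v, hv, rfl⟩, hvB⟩ := not_subset.1 hl
  obtain ⟨_, ⟨w, hw, rfl⟩, hwB⟩ := not_subset.1 hr
  have hvw : Icc v w ⊆ Ioo a b := Icc_subset_Ioo hv.1 hw.2
  have hK : γ '' Icc v w ⊆ γ '' Ioo a b := image_mono hvw
  refine (hB.apply_mem_or_apply_mem_of_image_Icc
    (isOpen_image_of_subset_Ioo hγc hγi hV isOpen_Ioo (Ioo_subset_Icc_self.trans hvw))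
    (isCompact_Icc.image_of_continuousOn (hγc.mono (hvw.trans Ioo_subset_Icc_self))).isClosed
    ⟨hpB, u, ⟨hv.2.trans hu.1, hu.2.trans hw.1⟩, rfl⟩
    ⟨hqB, fun h => hq (hK h)⟩).elim hvB hwB

end Arc

theorem stmt_2_general (X : Type*) [MetricSpace X] [CompactSpace X]
    (γ : ℝ → X) (hγc : ContinuousOn γ (Set.Icc 0 1))
    (hγi : Set.InjOn γ (Set.Icc 0 1))
    (hA : IsFreeArc (γ '' Set.Icc 0 1))
    (s t : ℝ) (h0s : 0 < s) (hst : s < t) (ht1 : t < 1)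
    (ε δ : ℝ)
    (hε : ε = min (Metric.diam (γ '' Set.Icc 0 s)) (Metric.diam (γ '' Set.Icc t 1)))
    (hδ : ∀ p q : X, 0 < dist p q → dist p q ≤ δ →
      ∃ B : Set X, IsArcEnds B p q ∧ Metric.diam B < ε) :
    δ < setDist (γ '' Set.Icc s t) (Set.univ \ γ '' Set.Ioo 0 1) := by
  have hV : IsOpen (γ '' Ioo 0 1) := isOpen_image_Ioo_of_isFreeArc hγc hγi hA
  have hst1 : Icc s t ⊆ Ioo 0 1 := Icc_subset_Ioo h0s ht1
  have hγ0 : γ 0 ∉ γ '' Ioo 0 1 := fun ⟨m, hm, he⟩ =>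
    hm.1.ne (hγi (left_mem_Icc.2 zero_le_one) (Ioo_subset_Icc_self hm) he.symm)
  rw [← compl_eq_univ_sdiff]
  refine lt_setDist_of_forall_lt
    (isCompact_Icc.image_of_continuousOn (hγc.mono (hst1.trans Ioo_subset_Icc_self)))
    hV.isClosed_compl.isCompact ⟨γ s, s, left_mem_Icc.2 hst.le, rfl⟩ ⟨γ 0, hγ0⟩ ?_
  rintro _ ⟨u, hu, rfl⟩ q hq
  by_contra! hle
  have hpq : 0 < dist (γ u) q :=
    dist_pos.2 (ne_of_mem_of_not_mem (mem_image_of_mem γ (hst1 hu)) hq)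
  obtain ⟨_, ⟨β, hβc, -, rfl, hβ0, hβ1⟩, hBε⟩ := hδ _ _ hpq hle
  have hεB := hε ▸ min_diam_image_Icc_le_diam hγc hγi hV h0s ht1 hu
    (isPreconnected_Icc.image β hβc) isBounded_of_compactSpace
    ⟨0, left_mem_Icc.2 zero_le_one, hβ0⟩ ⟨1, right_mem_Icc.2 zero_le_one, hβ1⟩ hq
  linarith

/-- if `A = γ '' [0,1]` is a free arc with endpoints `a = γ 0`,
`b = γ 1` and `a ≺ x = γ s ≺ y = γ t ≺ b` in a natural ordering, with
`ε = min (diam [a,x]) (diam [y,b])` and `δ = δ(ε)` as in Lemma 2.1, then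
`d([x,y]_A, X ∖ (a,b)_A) > δ`. -/
theorem stmt_2 (X : Type*) [MetricSpace X] [CompactSpace X] [ConnectedSpace X]
    [LocallyConnectedSpace X]
    (γ : ℝ → X) (hγc : ContinuousOn γ (Set.Icc 0 1))
    (hγi : Set.InjOn γ (Set.Icc 0 1))
    (hA : IsFreeArc (γ '' Set.Icc 0 1))
    (s t : ℝ) (h0s : 0 < s) (hst : s < t) (ht1 : t < 1)
    (ε δ : ℝ)
    (hε : ε = min (Metric.diam (γ '' Set.Icc 0 s)) (Metric.diam (γ '' Set.Icc t 1)))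
    (hδ0 : 0 < δ) (hδε : δ ≤ ε / 2)
    (hδ : ∀ p q : X, 0 < dist p q → dist p q ≤ δ →
      ∃ B : Set X, IsArcEnds B p q ∧ Metric.diam B < ε) :
    δ < setDist (γ '' Set.Icc s t) (Set.univ \ γ '' Set.Ioo 0 1) :=
  stmt_2_general X γ hγc hγi hA s t h0s hst ht1 ε δ hε hδ
end

section
/- Let X be a Peano continuum and let J be a maximal free open interval of X with closure cl(J) ≠ X. Then exactly one of the following holds: (i) cl(J) = J ∪ {a,b} is an arc with endpoints a, b ∈ X ∖ J and {a,b} contains an endpoint of X; (ii) cl(J) = J ∪ {a,b} is an arc with endpoints a, b ∈ X ∖ J and neither a nor b is an endpoint of X; (iii) cl(J) = J ∪ {c} is a circle for some single point c ∈ X ∖ J. -/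
open Set Metric Topology

section FreeArcAux

variable {X : Type*} [TopologicalSpace X] {J : Set X}

/-- The parametrization map from the model interval into `X`. -/
noncomputable def eMap (h : ↥J ≃ₜ ↥(Set.Ioo (0:ℝ) 1)) : ↥(Set.Ioo (0:ℝ) 1) → X :=
  fun r => ((h.symm r : ↥J) : X)

lemma eMap_continuous (h : ↥J ≃ₜ ↥(Set.Ioo (0:ℝ) 1)) : Continuous (eMap h) :=
  continuous_subtype_val.comp h.symm.continuous

lemma eMap_injective (h : ↥J ≃ₜ ↥(Set.Ioo (0:ℝ) 1)) : Function.Injective (eMap h) :=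
  Subtype.val_injective.comp h.symm.injective

lemma range_eMap (h : ↥J ≃ₜ ↥(Set.Ioo (0:ℝ) 1)) : Set.range (eMap h) = J := by
  have h1 : Set.range (eMap h) = Subtype.val '' (Set.range (h.symm)) := by
    rw [← Set.range_comp]; rfl
  have h2 : Set.range (h.symm) = Set.univ := h.symm.surjective.range_eq
  rw [h1, h2, Set.image_univ, Subtype.range_val]

lemma isOpenMap_eMap (hJ : IsOpen J) (h : ↥J ≃ₜ ↥(Set.Ioo (0:ℝ) 1)) : IsOpenMap (eMap h) :=
  hJ.isOpenMap_subtype_val.comp h.symm.isOpenMap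

/-- The lower tail of the interval. -/
noncomputable def tailSet (h : ↥J ≃ₜ ↥(Set.Ioo (0:ℝ) 1)) (t : ℝ) : Set X :=
  eMap h '' {r | (r : ℝ) < t}

/-- The limit set of the lower end. -/
noncomputable def limSet (h : ↥J ≃ₜ ↥(Set.Ioo (0:ℝ) 1)) : Set X :=
  ⋂ (t : ℝ) (_ : t ∈ Set.Ioo (0:ℝ) 1), closure (tailSet h t)

lemma tailSet_nonempty (h : ↥J ≃ₜ ↥(Set.Ioo (0:ℝ) 1)) {t : ℝ} (ht : t ∈ Set.Ioo (0:ℝ) 1) :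
    (tailSet h t).Nonempty := by
  have h1 : (0:ℝ) < t/2 := by linarith [ht.1]
  have h2 : t/2 < 1 := by linarith [ht.1, ht.2]
  have h3 : t/2 < t := by linarith [ht.1]
  exact ⟨eMap h ⟨t/2, h1, h2⟩, ⟨⟨t/2, h1, h2⟩, h3, rfl⟩⟩

lemma tailSet_mono (h : ↥J ≃ₜ ↥(Set.Ioo (0:ℝ) 1)) {t t' : ℝ} (htt : t ≤ t') :
    tailSet h t ⊆ tailSet h t' :=
  Set.image_mono (fun _ hr => lt_of_lt_of_le hr htt)

lemma tailSet_subset (h : ↥J ≃ₜ ↥(Set.Ioo (0:ℝ) 1)) (t : ℝ) : tailSet h t ⊆ J := by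
  have := Set.image_subset_range (eMap h) {r : ↥(Set.Ioo (0:ℝ) 1) | (r:ℝ) < t}
  rwa [range_eMap h] at this

lemma limSet_subset_closure (h : ↥J ≃ₜ ↥(Set.Ioo (0:ℝ) 1)) : limSet h ⊆ closure J := by
  intro x hx
  have := Set.mem_iInter₂.mp hx (1/2) (by norm_num)
  exact closure_mono (tailSet_subset h _) this

lemma limSet_disjoint (hJ : IsOpen J) (h : ↥J ≃ₜ ↥(Set.Ioo (0:ℝ) 1)) {z : X} (hz : z ∈ J) :
    z ∉ limSet h := by
  obtain ⟨r, rfl⟩ : ∃ r, eMap h r = z := by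
    have : z ∈ Set.range (eMap h) := by rw [range_eMap h]; exact hz
    exact this
  intro hmem
  have hto : r.1/2 ∈ Set.Ioo (0:ℝ) 1 := ⟨by linarith [r.2.1], by linarith [r.2.1, r.2.2]⟩
  have hcl := Set.mem_iInter₂.mp hmem (r.1/2) hto
  have hNopen : IsOpen (eMap h '' {s : ↥(Set.Ioo (0:ℝ) 1) | r.1/2 < s.1}) :=
    isOpenMap_eMap hJ h _ (isOpen_Ioi.preimage continuous_subtype_val)
  have hzN : eMap h r ∈ eMap h '' {s : ↥(Set.Ioo (0:ℝ) 1) | r.1/2 < s.1} :=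
    ⟨r, by simp only [Set.mem_setOf_eq]; linarith [r.2.1], rfl⟩
  obtain ⟨y, hyN, hytail⟩ := (_root_.mem_closure_iff.mp hcl) _ hNopen hzN
  obtain ⟨s, hs, rfl⟩ := hyN
  obtain ⟨s', hs', heq⟩ := hytail
  have := eMap_injective h heq
  subst this
  simp only [Set.mem_setOf_eq] at hs hs'
  linarith

/-- The "middle" part of the interval is compact. -/
lemma middle_isCompact (h : ↥J ≃ₜ ↥(Set.Ioo (0:ℝ) 1)) {t s : ℝ} (ht : 0 < t) (hs : s < 1) :
    IsCompact (eMap h '' {u : ↥(Set.Ioo (0:ℝ) 1) | t ≤ u.1 ∧ u.1 ≤ s}) := by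
  by_cases hts : t ≤ s
  · have hsub : ∀ u : ↥(Set.Icc t s), u.1 ∈ Set.Ioo (0:ℝ) 1 :=
      fun u => ⟨lt_of_lt_of_le ht u.2.1, lt_of_le_of_lt u.2.2 hs⟩
    have hcont : Continuous (fun u : ↥(Set.Icc t s) => eMap h ⟨u.1, hsub u⟩) :=
      (eMap_continuous h).comp (Continuous.subtype_mk continuous_subtype_val _)
    haveI : CompactSpace ↥(Set.Icc t s) := isCompact_iff_compactSpace.mp isCompact_Icc
    have hrange := isCompact_range hcont
    have heq : Set.range (fun u : ↥(Set.Icc t s) => eMap h ⟨u.1, hsub u⟩)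
        = eMap h '' {u : ↥(Set.Ioo (0:ℝ) 1) | t ≤ u.1 ∧ u.1 ≤ s} := by
      ext x; constructor
      · rintro ⟨u, rfl⟩
        exact ⟨⟨u.1, hsub u⟩, ⟨u.2.1, u.2.2⟩, rfl⟩
      · rintro ⟨u, ⟨hu1, hu2⟩, rfl⟩
        exact ⟨⟨u.1, hu1, hu2⟩, congrArg (eMap h) (Subtype.ext rfl)⟩
    rwa [heq] at hrange
  · have : eMap h '' {u : ↥(Set.Ioo (0:ℝ) 1) | t ≤ u.1 ∧ u.1 ≤ s} = ∅ := by
      rw [Set.image_eq_empty]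
      ext u; simp only [Set.mem_setOf_eq, Set.mem_empty_iff_false, iff_false, not_and, not_le]
      intro hu; by_contra hcon; push_neg at hcon; exact hts (le_trans hu hcon)
    rw [this]; exact isCompact_empty

lemma flipMem (r : ↥(Set.Ioo (0:ℝ) 1)) : (1 - r.1) ∈ Set.Ioo (0:ℝ) 1 :=
  ⟨by linarith [r.2.2], by linarith [r.2.1]⟩

/-- The order-reversing self-homeomorphism of `(0,1)`. -/
noncomputable def flipIoo : ↥(Set.Ioo (0:ℝ) 1) ≃ₜ ↥(Set.Ioo (0:ℝ) 1) where
  toFun r := ⟨1 - r.1, flipMem r⟩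
  invFun r := ⟨1 - r.1, flipMem r⟩
  left_inv r := Subtype.ext (by simp)
  right_inv r := Subtype.ext (by simp)
  continuous_toFun := Continuous.subtype_mk (continuous_const.sub continuous_subtype_val) flipMem
  continuous_invFun := Continuous.subtype_mk (continuous_const.sub continuous_subtype_val) flipMem

@[simp] lemma flipIoo_coe (r : ↥(Set.Ioo (0:ℝ) 1)) : ((flipIoo r : ↥(Set.Ioo (0:ℝ) 1)) : ℝ) = 1 - r.1 := rfl
@[simp] lemma flipIoo_symm_coe (r : ↥(Set.Ioo (0:ℝ) 1)) :
    ((flipIoo.symm r : ↥(Set.Ioo (0:ℝ) 1)) : ℝ) = 1 - r.1 := rfl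

lemma tailSet_flip (h : ↥J ≃ₜ ↥(Set.Ioo (0:ℝ) 1)) (t : ℝ) :
    tailSet (h.trans flipIoo) t = eMap h '' {s : ↥(Set.Ioo (0:ℝ) 1) | 1 - t < s.1} := by
  have hkey : ∀ r, eMap (h.trans flipIoo) r = eMap h (flipIoo.symm r) := fun r => rfl
  ext x; constructor
  · rintro ⟨r, hr, rfl⟩
    rw [hkey]
    refine ⟨flipIoo.symm r, ?_, rfl⟩
    simp only [Set.mem_setOf_eq, flipIoo_symm_coe] at hr ⊢
    linarith [hr]
  · rintro ⟨s, hs, rfl⟩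
    refine ⟨flipIoo s, ?_, ?_⟩
    · simp only [Set.mem_setOf_eq, flipIoo_coe] at hs ⊢
      linarith [hs]
    · rw [hkey, Homeomorph.symm_apply_apply]

variable [T2Space X]

lemma closure_decomp (hJ : IsOpen J) (h : ↥J ≃ₜ ↥(Set.Ioo (0:ℝ) 1)) :
    closure J = J ∪ limSet h ∪ limSet (h.trans flipIoo) := by
  apply Set.Subset.antisymm
  · intro x hx
    by_cases hxJ : x ∈ J
    · exact Or.inl (Or.inl hxJ)
    by_cases hxL : x ∈ limSet h
    · exact Or.inl (Or.inr hxL)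
    right
    by_contra hxR
    simp only [limSet, Set.mem_iInter] at hxL hxR
    push_neg at hxL hxR
    obtain ⟨t, ht, hxt⟩ := hxL
    obtain ⟨t', ht', hxt'⟩ := hxR
    have hsIoo : (1 - t') ∈ Set.Ioo (0:ℝ) 1 := ⟨by linarith [ht'.2], by linarith [ht'.1]⟩
    set M := eMap h '' {u : ↥(Set.Ioo (0:ℝ) 1) | t ≤ u.1 ∧ u.1 ≤ 1 - t'} with hMdef
    have hM : IsCompact M := middle_isCompact h ht.1 hsIoo.2
    have hcover : J ⊆ tailSet h t ∪ M ∪ tailSet (h.trans flipIoo) t' := by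
      intro z hz
      obtain ⟨u, rfl⟩ : ∃ u, eMap h u = z := by
        have : z ∈ Set.range (eMap h) := by rw [range_eMap h]; exact hz
        exact this
      rcases lt_or_ge u.1 t with hu | hu
      · exact Or.inl (Or.inl ⟨u, hu, rfl⟩)
      rcases le_or_gt u.1 (1 - t') with hu2 | hu2
      · exact Or.inl (Or.inr ⟨u, ⟨hu, hu2⟩, rfl⟩)
      · right; rw [tailSet_flip]; exact ⟨u, hu2, rfl⟩
    have hclsub : closure J ⊆ closure (tailSet h t) ∪ M ∪ closure (tailSet (h.trans flipIoo) t') := by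
      have h1 : closure J ⊆ closure (tailSet h t ∪ M ∪ tailSet (h.trans flipIoo) t') :=
        closure_mono hcover
      intro y hy
      have := h1 hy
      rw [closure_union, closure_union, hM.isClosed.closure_eq] at this
      exact this
    rcases hclsub hx with (hc | hc) | hc
    · exact hxt hc
    · refine hxJ ?_
      obtain ⟨u, -, rfl⟩ := hc
      have : eMap h u ∈ Set.range (eMap h) := Set.mem_range_self u
      rwa [range_eMap h] at this
    · exact hxt' hc
  · refine Set.union_subset (Set.union_subset subset_closure ?_) ?_
    · exact limSet_subset_closure h
    · exact limSet_subset_closure (h.trans flipIoo)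

section Compactness
variable [CompactSpace X]

/-- If an open set contains the limit set, it contains the closure of some tail. -/
lemma exists_tailSet_subset (h : ↥J ≃ₜ ↥(Set.Ioo (0:ℝ) 1)) {W : Set X} (hWo : IsOpen W)
    (hsub : limSet h ⊆ W) :
    ∃ t ∈ Set.Ioo (0:ℝ) 1, closure (tailSet h t) ⊆ W := by
  by_contra hcon
  push_neg at hcon
  haveI : Nonempty ↥(Set.Ioo (0:ℝ) 1) := ⟨⟨1/2, by norm_num⟩⟩
  have key : ∀ t : ↥(Set.Ioo (0:ℝ) 1), (closure (tailSet h t.1) ∩ Wᶜ).Nonempty := by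
    intro t
    obtain ⟨x, hx1, hx2⟩ := Set.not_subset.mp (hcon t.1 t.2)
    exact ⟨x, hx1, hx2⟩
  have hne := IsCompact.nonempty_iInter_of_directed_nonempty_isCompact_isClosed
    (fun t : ↥(Set.Ioo (0:ℝ) 1) => closure (tailSet h t.1) ∩ Wᶜ)
    (fun t t' => ⟨⟨min t.1 t'.1, lt_min t.2.1 t'.2.1, lt_of_le_of_lt (min_le_left _ _) t.2.2⟩,
      Set.inter_subset_inter_left _ (closure_mono (tailSet_mono h (min_le_left _ _))),
      Set.inter_subset_inter_left _ (closure_mono (tailSet_mono h (min_le_right _ _)))⟩)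
    key
    (fun _ => (IsClosed.inter isClosed_closure hWo.isClosed_compl).isCompact)
    (fun _ => IsClosed.inter isClosed_closure hWo.isClosed_compl)
  obtain ⟨x, hx⟩ := hne
  rw [Set.mem_iInter] at hx
  have hxL : x ∈ limSet h := by
    rw [limSet, Set.mem_iInter₂]
    intro t ht
    exact ((hx ⟨t, ht⟩).1)
  exact (hx ⟨1/2, by norm_num⟩).2 (hsub hxL)

lemma limSet_nonempty (h : ↥J ≃ₜ ↥(Set.Ioo (0:ℝ) 1)) : (limSet h).Nonempty := by
  haveI : Nonempty ↥(Set.Ioo (0:ℝ) 1) := ⟨⟨1/2, by norm_num⟩⟩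
  have hne := IsCompact.nonempty_iInter_of_directed_nonempty_isCompact_isClosed
    (fun t : ↥(Set.Ioo (0:ℝ) 1) => closure (tailSet h t.1))
    (fun t t' => ⟨⟨min t.1 t'.1, lt_min t.2.1 t'.2.1, lt_of_le_of_lt (min_le_left _ _) t.2.2⟩,
      closure_mono (tailSet_mono h (min_le_left _ _)),
      closure_mono (tailSet_mono h (min_le_right _ _))⟩)
    (fun t => (tailSet_nonempty h t.2).closure)
    (fun _ => isClosed_closure.isCompact)
    (fun _ => isClosed_closure)
  obtain ⟨x, hx⟩ := hne
  rw [Set.mem_iInter] at hx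
  exact ⟨x, by rw [limSet, Set.mem_iInter₂]; exact fun t ht => hx ⟨t, ht⟩⟩

end Compactness

section Subsingleton
variable {Y : Type*} [MetricSpace Y] [CompactSpace Y] [LocallyConnectedSpace Y] {J : Set Y}

lemma limSet_subsingleton (hJ : IsOpen J) (h : ↥J ≃ₜ ↥(Set.Ioo (0:ℝ) 1)) :
    (limSet h).Subsingleton := by
  intro p hp q hq
  by_contra hpq
  set r := dist p q / 3 with hrdef
  have hr : 0 < r := by
    have := dist_pos.mpr hpq
    rw [hrdef]; linarith
  obtain ⟨U, hUsub, hUopen, hpU, hUconn⟩ :=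
    locallyConnectedSpace_iff_subsets_isOpen_isConnected.mp (by infer_instance) p
      (Metric.ball p r) (Metric.ball_mem_nhds p hr)
  have hUq : ∀ y, dist y q < r → y ∉ U := by
    intro y hy hyU
    have h1 : dist y p < r := Metric.mem_ball.mp (hUsub hyU)
    have h2 := dist_triangle p y q
    have h3 : dist p y = dist y p := dist_comm p y
    rw [hrdef] at hr h1 hy
    linarith
  have hqpt : ∀ t ∈ Set.Ioo (0:ℝ) 1, ∃ s : ↥(Set.Ioo (0:ℝ) 1), s.1 < t ∧ dist (eMap h s) q < r := by
    intro t ht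
    have hcl := Set.mem_iInter₂.mp hq t ht
    obtain ⟨y, hyB, hyT⟩ :=
      (_root_.mem_closure_iff.mp hcl) _ Metric.isOpen_ball (Metric.mem_ball_self hr)
    obtain ⟨s, hs, rfl⟩ := hyT
    exact ⟨s, hs, Metric.mem_ball.mp hyB⟩
  have hppt : ∀ t ∈ Set.Ioo (0:ℝ) 1, ∃ s : ↥(Set.Ioo (0:ℝ) 1), s.1 < t ∧ eMap h s ∈ U := by
    intro t ht
    have hcl := Set.mem_iInter₂.mp hp t ht
    obtain ⟨y, hyU, hyT⟩ := (_root_.mem_closure_iff.mp hcl) _ hUopen hpU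
    obtain ⟨s, hs, rfl⟩ := hyT
    exact ⟨s, hs, hyU⟩
  obtain ⟨s₀, hs₀t, hs₀q⟩ := hqpt (1/2) (by norm_num)
  obtain ⟨s, hst, hsU⟩ := hppt s₀.1 s₀.2
  obtain ⟨s₁, hs₁t, hs₁q⟩ := hqpt s.1 s.2
  set x := eMap h s with hxdef
  have hxJ : x ∈ J := by
    have : x ∈ Set.range (eMap h) := Set.mem_range_self s
    rwa [range_eMap h] at this
  set V := connectedComponentIn (U ∩ J) x with hVdef
  have hxV : x ∈ V := mem_connectedComponentIn ⟨hsU, hxJ⟩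
  have hVsub : V ⊆ U ∩ J := connectedComponentIn_subset _ _
  have hVopen : IsOpen V := (hUopen.inter hJ).connectedComponentIn
  have hVpre : IsPreconnected V := isPreconnected_connectedComponentIn
  set P : Set ℝ := Subtype.val '' (eMap h ⁻¹' V) with hPdef
  have hPpre : IsPreconnected P := by
    have h1 : IsPreconnected (Subtype.val ⁻¹' V : Set ↥J) := by
      rw [← Topology.IsInducing.subtypeVal.isPreconnected_image, Subtype.image_preimage_coe,
        Set.inter_eq_self_of_subset_right (fun v hv => (hVsub hv).2)]
      exact hVpre
    have h2 : eMap h ⁻¹' V = ⇑h '' (Subtype.val ⁻¹' V) := by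
      ext u
      constructor
      · intro hu
        exact ⟨h.symm u, hu, h.apply_symm_apply u⟩
      · rintro ⟨w, hw, rfl⟩
        show (↑(h.symm (h w)) : Y) ∈ V
        rwa [h.symm_apply_apply]
    rw [hPdef, h2]
    exact (h1.image _ h.continuous.continuousOn).image _ continuous_subtype_val.continuousOn
  have hσP : s.1 ∈ P := ⟨s, hxV, rfl⟩
  have hnot : ∀ s' : ↥(Set.Ioo (0:ℝ) 1), dist (eMap h s') q < r → s'.1 ∉ P := by
    rintro s' hd ⟨w, hwV, hww⟩
    have hws : w = s' := Subtype.ext hww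
    subst hws
    exact hUq _ hd (hVsub hwV).1
  have hs₀P : s₀.1 ∉ P := hnot s₀ hs₀q
  have hs₁P : s₁.1 ∉ P := hnot s₁ hs₁q
  have hPsub : P ⊆ Set.Icc s₁.1 s₀.1 := by
    intro ρ hρ
    have hOrd := hPpre.ordConnected
    constructor
    · by_contra hlt
      push_neg at hlt
      exact hs₁P (hOrd.out hρ hσP ⟨hlt.le, hs₁t.le⟩)
    · by_contra hlt
      push_neg at hlt
      exact hs₀P (hOrd.out hσP hρ ⟨hst.le, hlt.le⟩)
  set K := eMap h '' {u : ↥(Set.Ioo (0:ℝ) 1) | s₁.1 ≤ u.1 ∧ u.1 ≤ s₀.1} with hKdef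
  have hK : IsCompact K := middle_isCompact h s₁.2.1 s₀.2.2
  have hVK : V ⊆ K := by
    intro v hv
    obtain ⟨u, rfl⟩ : ∃ u, eMap h u = v := by
      have : v ∈ Set.range (eMap h) := by rw [range_eMap h]; exact (hVsub hv).2
      exact this
    exact ⟨u, hPsub ⟨u, hv, rfl⟩, rfl⟩
  have hKJ : K ⊆ J := by
    rintro y ⟨u, -, rfl⟩
    have : eMap h u ∈ Set.range (eMap h) := Set.mem_range_self u
    rwa [range_eMap h] at this
  have hclVK : closure V ⊆ K := hK.isClosed.closure_subset_iff.mpr hVK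
  have hclV : closure V ∩ U ⊆ V := by
    rintro w ⟨hw1, hw2⟩
    have hwK : w ∈ K := hclVK hw1
    have hpre : IsPreconnected (insert w V) :=
      hVpre.subset_closure (Set.subset_insert w V)
        (Set.insert_subset_iff.mpr ⟨hw1, subset_closure⟩)
    have hsubV := hpre.subset_connectedComponentIn (Set.mem_insert_of_mem w hxV)
      (Set.insert_subset_iff.mpr ⟨(⟨hw2, hKJ hwK⟩ : w ∈ U ∩ J), hVsub⟩)
    exact hsubV (Set.mem_insert w V)
  have hpV : p ∉ closure V := fun hc => limSet_disjoint hJ h (hKJ (hclVK hc)) hp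
  have hfin := hUconn.isPreconnected V (closure V)ᶜ hVopen isClosed_closure.isOpen_compl
    (fun u hu => (Classical.em (u ∈ closure V)).elim (fun hcv => Or.inl (hclV ⟨hcv, hu⟩)) Or.inr)
    ⟨x, hsU, hxV⟩ ⟨p, hpU, hpV⟩
  obtain ⟨z, _, hz2, hz3⟩ := hfin
  exact hz3 (subset_closure hz2)

lemma arc_case (hJ : IsOpen J) (h : ↥J ≃ₜ ↥(Set.Ioo (0:ℝ) 1)) {a b : Y}
    (ha : limSet h = {a}) (hb : limSet (h.trans flipIoo) = {b}) (hab : a ≠ b) :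
    ∃ γ : ℝ → Y, ContinuousOn γ (Set.Icc 0 1) ∧ Set.InjOn γ (Set.Icc 0 1) ∧
      γ '' Set.Icc 0 1 = closure J ∧ γ 0 = a ∧ γ 1 = b := by
  classical
  have haJ : a ∉ J := fun hc => limSet_disjoint hJ h hc (ha ▸ rfl)
  have hbJ : b ∉ J := fun hc =>
    limSet_disjoint hJ (h.trans flipIoo) hc (hb ▸ rfl)
  have hacl : a ∈ closure J := limSet_subset_closure h (ha ▸ rfl)
  have hbcl : b ∈ closure J := limSet_subset_closure (h.trans flipIoo) (hb ▸ rfl)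
  set γ : ℝ → Y := fun r => if hr : r ∈ Set.Ioo (0:ℝ) 1 then eMap h ⟨r, hr⟩
    else if r ≤ 0 then a else b with hγdef
  have hγIoo : ∀ (u : ℝ) (hu : u ∈ Set.Ioo (0:ℝ) 1), γ u = eMap h ⟨u, hu⟩ := by
    intro u hu; rw [hγdef]; exact dif_pos hu
  have hγ0 : γ 0 = a := by
    rw [hγdef]
    simp only [Set.mem_Ioo, lt_irrefl, false_and, dite_false, le_refl, if_true]
  have hγ1 : γ 1 = b := by
    rw [hγdef]
    norm_num
  have hγJ : ∀ z ∈ J, ∃ u ∈ Set.Ioo (0:ℝ) 1, γ u = z := by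
    intro z hz
    obtain ⟨u, rfl⟩ : ∃ u, eMap h u = z := by
      have : z ∈ Set.range (eMap h) := by rw [range_eMap h]; exact hz
      exact this
    exact ⟨u.1, u.2, by rw [hγIoo u.1 u.2]⟩
  refine ⟨γ, ?_, ?_, ?_, hγ0, hγ1⟩
  · -- ContinuousOn
    intro ρ hρ
    rcases eq_or_lt_of_le hρ.1 with h0 | h0
    · -- ρ = 0
      rw [← h0]
      show Filter.Tendsto γ (nhdsWithin 0 (Set.Icc 0 1)) (nhds (γ 0))
      rw [hγ0, Filter.tendsto_def]
      intro W hW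
      obtain ⟨W', hW'sub, hW'open, haW'⟩ := _root_.mem_nhds_iff.mp hW
      obtain ⟨t, htIoo, htsub⟩ := exists_tailSet_subset h hW'open
        (by rw [ha]; exact Set.singleton_subset_iff.mpr haW')
      apply mem_nhdsWithin.mpr ⟨Set.Iio t, isOpen_Iio, htIoo.1, ?_⟩
      rintro u ⟨hu1, hu2⟩
      show γ u ∈ W
      rcases eq_or_lt_of_le hu2.1 with hu0 | hu0
      · rw [← hu0, hγ0]; exact hW'sub haW'
      · have huIoo : u ∈ Set.Ioo (0:ℝ) 1 := ⟨hu0, lt_trans hu1 htIoo.2⟩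
        rw [hγIoo u huIoo]
        exact hW'sub (htsub (subset_closure ⟨⟨u, huIoo⟩, hu1, rfl⟩))
    rcases eq_or_lt_of_le hρ.2 with h1 | h1
    · -- ρ = 1
      rw [h1]
      show Filter.Tendsto γ (nhdsWithin 1 (Set.Icc 0 1)) (nhds (γ 1))
      rw [hγ1, Filter.tendsto_def]
      intro W hW
      obtain ⟨W', hW'sub, hW'open, hbW'⟩ := _root_.mem_nhds_iff.mp hW
      obtain ⟨t, htIoo, htsub⟩ := exists_tailSet_subset (h.trans flipIoo) hW'open
        (by rw [hb]; exact Set.singleton_subset_iff.mpr hbW')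
      apply mem_nhdsWithin.mpr ⟨Set.Ioi (1 - t), isOpen_Ioi, by simp [htIoo.1], ?_⟩
      rintro u ⟨hu1, hu2⟩
      show γ u ∈ W
      rcases eq_or_lt_of_le hu2.2 with hu0 | hu0
      · rw [hu0, hγ1]; exact hW'sub hbW'
      · have huIoo : u ∈ Set.Ioo (0:ℝ) 1 := by
          constructor
          · have : (1:ℝ) - t < u := hu1
            have := htIoo.2
            linarith
          · exact hu0
        rw [hγIoo u huIoo]
        refine hW'sub (htsub (subset_closure ?_))
        rw [tailSet_flip]
        exact ⟨⟨u, huIoo⟩, by simpa using hu1, rfl⟩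
    · -- interior
      have hIoo : ContinuousOn γ (Set.Ioo 0 1) := by
        rw [continuousOn_iff_continuous_restrict]
        have : Set.domRestrict (Set.Ioo 0 1) γ = eMap h := by
          funext u
          exact dif_pos u.2
        rw [this]
        exact eMap_continuous h
      exact (hIoo.continuousAt (Ioo_mem_nhds h0 h1)).continuousWithinAt
  · -- InjOn
    intro u hu v hv huv
    by_cases huI : u ∈ Set.Ioo (0:ℝ) 1 <;> by_cases hvI : v ∈ Set.Ioo (0:ℝ) 1
    · rw [hγIoo u huI, hγIoo v hvI] at huv
      exact congrArg Subtype.val (eMap_injective h huv)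
    · exfalso
      have h1 : γ u ∈ J := by
        rw [hγIoo u huI]
        have : eMap h ⟨u, huI⟩ ∈ Set.range (eMap h) := Set.mem_range_self _
        rwa [range_eMap h] at this
      have h2 : γ v = a ∨ γ v = b := by
        rw [hγdef]
        simp only [hvI, dite_false]
        by_cases hv0 : v ≤ 0
        · simp [hv0]
        · simp [hv0]
      rw [huv] at h1
      rcases h2 with h2 | h2 <;> rw [h2] at h1
      · exact haJ h1
      · exact hbJ h1
    · exfalso
      have h1 : γ v ∈ J := by
        rw [hγIoo v hvI]
        have : eMap h ⟨v, hvI⟩ ∈ Set.range (eMap h) := Set.mem_range_self _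
        rwa [range_eMap h] at this
      have h2 : γ u = a ∨ γ u = b := by
        rw [hγdef]
        simp only [huI, dite_false]
        by_cases hu0 : u ≤ 0
        · simp [hu0]
        · simp [hu0]
      rw [← huv] at h1
      rcases h2 with h2 | h2 <;> rw [h2] at h1
      · exact haJ h1
      · exact hbJ h1
    · -- both endpoints
      have hu' : u = 0 ∨ u = 1 := by
        rcases eq_or_lt_of_le hu.1 with h' | h'
        · exact Or.inl h'.symm
        · right
          rcases eq_or_lt_of_le hu.2 with h'' | h''
          · exact h''
          · exact absurd ⟨h', h''⟩ huI
      have hv' : v = 0 ∨ v = 1 := by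
        rcases eq_or_lt_of_le hv.1 with h' | h'
        · exact Or.inl h'.symm
        · right
          rcases eq_or_lt_of_le hv.2 with h'' | h''
          · exact h''
          · exact absurd ⟨h', h''⟩ hvI
      rcases hu' with rfl | rfl <;> rcases hv' with rfl | rfl
      · rfl
      · exact absurd (by rw [hγ0, hγ1] at huv; exact huv) hab
      · exact absurd (by rw [hγ0, hγ1] at huv; exact huv.symm) hab
      · rfl
  · -- image
    apply Set.Subset.antisymm
    · rintro z ⟨u, hu, rfl⟩
      by_cases huI : u ∈ Set.Ioo (0:ℝ) 1
      · rw [hγIoo u huI]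
        apply subset_closure
        have : eMap h ⟨u, huI⟩ ∈ Set.range (eMap h) := Set.mem_range_self _
        rwa [range_eMap h] at this
      · rw [hγdef]
        simp only [huI, dite_false]
        by_cases hu0 : u ≤ 0
        · simpa [hu0] using hacl
        · simpa [hu0] using hbcl
    · intro z hz
      rw [closure_decomp hJ h, ha, hb] at hz
      rcases hz with (hz | hz) | hz
      · obtain ⟨u, hu, huz⟩ := hγJ z hz
        exact ⟨u, ⟨hu.1.le, hu.2.le⟩, huz⟩
      · rw [Set.mem_singleton_iff] at hz
        exact ⟨0, ⟨le_refl _, by norm_num⟩, by rw [hγ0, hz]⟩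
      · rw [Set.mem_singleton_iff] at hz
        exact ⟨1, ⟨by norm_num, le_refl _⟩, by rw [hγ1, hz]⟩

lemma circle_case (hJ : IsOpen J) (h : ↥J ≃ₜ ↥(Set.Ioo (0:ℝ) 1)) {c : Y}
    (ha : limSet h = {c}) (hb : limSet (h.trans flipIoo) = {c}) :
    Nonempty (↥(closure J) ≃ₜ ↥(Metric.sphere (0:ℂ) 1)) := by
  classical
  have hcJ : c ∉ J := fun hc => limSet_disjoint hJ h hc (ha ▸ rfl)
  have hccl : c ∈ closure J := limSet_subset_closure h (ha ▸ rfl)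
  have hclJ : closure J = J ∪ {c} := by
    rw [closure_decomp hJ h, ha, hb, Set.union_assoc, Set.union_self]
  have hmemJ : ∀ s : ↥(Set.Ioo (0:ℝ) 1), eMap h s ∈ J := by
    intro s
    have : eMap h s ∈ Set.range (eMap h) := Set.mem_range_self s
    rwa [range_eMap h] at this
  -- the circle parametrization
  set G : ℝ → ℂ := fun u => Complex.exp (((2 * Real.pi * u : ℝ) : ℂ) * Complex.I) with hGdef
  have hGcont : Continuous G := by rw [hGdef]; fun_prop
  have hG0 : G 0 = 1 := by rw [hGdef]; norm_num
  have hG1 : G 1 = 1 := by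
    rw [hGdef]
    push_cast
    rw [mul_one, Complex.exp_two_pi_mul_I]
  have hGabs : ∀ u, ‖G u‖ = 1 := by
    intro u; rw [hGdef]; simp [Complex.norm_exp]
  have hGdiff : ∀ u v : ℝ, G u = G v → ∃ n : ℤ, u = v + n := by
    intro u v huv
    rw [hGdef, Complex.exp_eq_exp_iff_exists_int] at huv
    obtain ⟨n, hn⟩ := huv
    refine ⟨n, ?_⟩
    have him := congrArg Complex.im hn
    simp only [Complex.add_im, Complex.mul_im, Complex.ofReal_re, Complex.I_im,
      Complex.ofReal_im, Complex.I_re, mul_zero, mul_one, zero_mul, add_zero] at him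
    push_cast at him
    simp at him
    have hπ := Real.pi_pos
    nlinarith [him]
  have hinj01 : ∀ u ∈ Set.Ioo (0:ℝ) 1, ∀ v ∈ Set.Ioo (0:ℝ) 1, G u = G v → u = v := by
    intro u hu v hv huv
    obtain ⟨n, hn⟩ := hGdiff u v huv
    have h1 : (n:ℝ) < 1 := by
      have := hu.2; have := hv.1; linarith
    have h2 : (-1:ℝ) < n := by
      have := hu.1; have := hv.2; linarith
    have hn1 : n < 1 := by exact_mod_cast h1
    have hn2 : -1 < n := by exact_mod_cast h2
    have : n = 0 := by omega
    rw [this] at hn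
    simpa using hn
  have hne1 : ∀ u ∈ Set.Ioo (0:ℝ) 1, G u ≠ 1 := by
    intro u hu hu1
    rw [← hG0] at hu1
    obtain ⟨n, hn⟩ := hGdiff u 0 hu1
    rw [zero_add] at hn
    have h1 : (0:ℝ) < n := by rw [← hn]; exact hu.1
    have h2 : (n:ℝ) < 1 := by rw [← hn]; exact hu.2
    have hn1 : (0:ℤ) < n := by exact_mod_cast h1
    have hn2 : n < 1 := by exact_mod_cast h2
    omega
  have hGsurj : ∀ z : ℂ, ‖z‖ = 1 → z ≠ 1 → ∃ u ∈ Set.Ioo (0:ℝ) 1, G u = z := by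
    intro z hz hz1
    have harg := Complex.norm_mul_exp_arg_mul_I z
    rw [hz] at harg
    simp only [Complex.ofReal_one, one_mul] at harg
    have hargle := Complex.arg_le_pi z
    have harggt := Complex.neg_pi_lt_arg z
    have hπ := Real.pi_pos
    have hargne : Complex.arg z ≠ 0 := by
      intro h0
      rw [h0] at harg
      simp only [Complex.ofReal_zero, zero_mul, Complex.exp_zero] at harg
      exact hz1 harg.symm
    have h2π : (0:ℝ) < 2*Real.pi := by linarith
    have hπ0 : Real.pi ≠ 0 := ne_of_gt hπ
    rcases lt_or_gt_of_ne hargne with hneg | hpos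
    · refine ⟨Complex.arg z / (2*Real.pi) + 1, ⟨?_, ?_⟩, ?_⟩
      · have hdiv : (-1:ℝ) < Complex.arg z / (2*Real.pi) :=
          (lt_div_iff₀ h2π).mpr (by linarith)
        linarith
      · have hdiv : Complex.arg z / (2*Real.pi) < 0 := div_neg_of_neg_of_pos hneg h2π
        linarith
      · have hval : 2*Real.pi*(Complex.arg z/(2*Real.pi)+1) = Complex.arg z + 2*Real.pi := by
          field_simp
        show Complex.exp (((2 * Real.pi * (Complex.arg z / (2 * Real.pi) + 1) : ℝ) : ℂ)
          * Complex.I) = z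
        rw [hval]
        push_cast
        rw [add_mul, Complex.exp_add, Complex.exp_two_pi_mul_I, mul_one]
        exact harg
    · refine ⟨Complex.arg z / (2*Real.pi), ⟨div_pos hpos h2π, ?_⟩, ?_⟩
      · rw [div_lt_one h2π]
        linarith
      · have hval : 2*Real.pi*(Complex.arg z/(2*Real.pi)) = Complex.arg z := by
          field_simp
        show Complex.exp (((2 * Real.pi * (Complex.arg z / (2 * Real.pi)) : ℝ) : ℂ)
          * Complex.I) = z
        rw [hval]
        exact harg
  -- the coordinate function
  set ρ : Y → ℝ := fun z => if hz : z ∈ J then ((h ⟨z, hz⟩ : ↥(Set.Ioo (0:ℝ) 1)) : ℝ) else 0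
    with hρdef
  have hρe : ∀ s : ↥(Set.Ioo (0:ℝ) 1), ρ (eMap h s) = s.1 := by
    intro s
    rw [hρdef]
    simp only []
    rw [dif_pos (hmemJ s)]
    have heq : (⟨eMap h s, hmemJ s⟩ : ↥J) = h.symm s := Subtype.ext rfl
    rw [heq, h.apply_symm_apply]
  have hρmem : ∀ z, ∀ hz : z ∈ J, ρ z ∈ Set.Ioo (0:ℝ) 1 := by
    intro z hz
    rw [hρdef]
    simp only []
    rw [dif_pos hz]
    exact (h ⟨z, hz⟩).2
  have hρcont : ContinuousOn ρ J := by
    rw [continuousOn_iff_continuous_restrict]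
    have : Set.domRestrict J ρ = fun u : ↥J => ((h u : ↥(Set.Ioo (0:ℝ) 1)) : ℝ) := by
      funext u
      exact dif_pos u.2
    rw [this]
    exact continuous_subtype_val.comp h.continuous
  set Φ : Y → ℂ := fun z => if z ∈ J then G (ρ z) else 1 with hΦdef
  have hΦJ : ∀ z ∈ J, Φ z = G (ρ z) := fun z hz => if_pos hz
  have hΦc : Φ c = 1 := if_neg hcJ
  have hΦabs : ∀ z, ‖Φ z‖ = 1 := by
    intro z
    rw [hΦdef]
    by_cases hz : z ∈ J
    · simp only [hz, if_true]; exact hGabs _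
    · simp only [hz, if_false, norm_one]
  have hclc : ∀ z ∈ closure J, z ∉ J → z = c := by
    intro z hz hzJ
    rcases (hclJ ▸ hz) with h' | h'
    · exact absurd h' hzJ
    · exact h'
  -- continuity of Φ on the closure
  have hΦcont : ContinuousOn Φ (closure J) := by
    intro z hz
    by_cases hzJ : z ∈ J
    · apply ContinuousAt.continuousWithinAt
      have hρc : ContinuousAt ρ z := hρcont.continuousAt (hJ.mem_nhds hzJ)
      have hGc : ContinuousAt (fun w => G (ρ w)) z := (hGcont.continuousAt).comp hρc
      apply hGc.congr
      filter_upwards [hJ.mem_nhds hzJ] with w hw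
      exact (hΦJ w hw).symm
    · have hzc : z = c := hclc z hz hzJ
      subst hzc
      show Filter.Tendsto Φ (nhdsWithin z (closure J)) (nhds (Φ z))
      rw [hΦc, Filter.tendsto_def]
      intro W hW
      have hW0 : G ⁻¹' W ∈ nhds (0:ℝ) :=
        hGcont.continuousAt.preimage_mem_nhds (by rw [hG0]; exact hW)
      have hW1 : G ⁻¹' W ∈ nhds (1:ℝ) :=
        hGcont.continuousAt.preimage_mem_nhds (by rw [hG1]; exact hW)
      obtain ⟨ε₀, hε₀, hball0⟩ := Metric.mem_nhds_iff.mp hW0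
      obtain ⟨ε₁, hε₁, hball1⟩ := Metric.mem_nhds_iff.mp hW1
      set t := min ε₀ (1/2) with htdef
      set s := max (1 - ε₁) (1/2) with hsdef
      have ht0 : 0 < t := lt_min hε₀ (by norm_num)
      have hs1 : s < 1 := by
        apply max_lt
        · linarith
        · norm_num
      set M := eMap h '' {u : ↥(Set.Ioo (0:ℝ) 1) | t ≤ u.1 ∧ u.1 ≤ s} with hMdef
      have hM : IsCompact M := middle_isCompact h ht0 hs1
      have hMJ : M ⊆ J := by
        rintro y ⟨u, -, rfl⟩
        exact hmemJ u
      have hcM : z ∉ M := fun hc' => hzJ (hMJ hc')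
      refine mem_nhdsWithin.mpr ⟨Mᶜ, hM.isClosed.isOpen_compl, hcM, ?_⟩
      rintro w ⟨hw1, hw2⟩
      show Φ w ∈ W
      by_cases hwJ : w ∈ J
      · obtain ⟨u, rfl⟩ : ∃ u, eMap h u = w := by
          have : w ∈ Set.range (eMap h) := by rw [range_eMap h]; exact hwJ
          exact this
        rw [hΦJ _ hwJ, hρe]
        have hout : u.1 < t ∨ s < u.1 := by
          by_contra hcon
          push_neg at hcon
          exact hw1 ⟨u, ⟨hcon.1, hcon.2⟩, rfl⟩
        rcases hout with hout | hout
        · apply hball0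
          rw [Metric.mem_ball, Real.dist_eq, sub_zero, abs_of_pos u.2.1]
          exact lt_of_lt_of_le hout (min_le_left _ _)
        · apply hball1
          rw [Metric.mem_ball, Real.dist_eq, abs_of_neg (by linarith [u.2.2] : u.1 - 1 < 0)]
          have : 1 - ε₁ ≤ s := le_max_left _ _
          have := u.2.2
          simp only [neg_sub]
          linarith
      · rw [show w = z from hclc w hw2 hwJ, hΦc]
        exact mem_of_mem_nhds hW
  -- the bijection
  haveI : CompactSpace ↥(closure J) := isCompact_iff_compactSpace.mp
    (isClosed_closure.isCompact)
  set F : ↥(closure J) → ↥(Metric.sphere (0:ℂ) 1) := fun z =>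
    ⟨Φ z.1, by rw [mem_sphere_zero_iff_norm]; exact hΦabs _⟩ with hFdef
  have hρinj : ∀ z w, ∀ hz : z ∈ J, ∀ hw : w ∈ J, ρ z = ρ w → z = w := by
    intro z w hz hw hzw
    rw [hρdef] at hzw
    simp only [] at hzw
    rw [dif_pos hz, dif_pos hw] at hzw
    have h1 : (h ⟨z, hz⟩) = (h ⟨w, hw⟩) := Subtype.ext hzw
    have h2 := h.injective h1
    exact congrArg Subtype.val h2
  have hFinj : Function.Injective F := by
    intro z w hzw
    have hΦeq : Φ z.1 = Φ w.1 := congrArg Subtype.val hzw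
    apply Subtype.ext
    by_cases hz : z.1 ∈ J <;> by_cases hw : w.1 ∈ J
    · rw [hΦJ _ hz, hΦJ _ hw] at hΦeq
      exact hρinj _ _ hz hw
        (hinj01 _ (hρmem _ hz) _ (hρmem _ hw) hΦeq)
    · rw [hΦJ _ hz, show Φ w.1 = 1 from if_neg hw] at hΦeq
      exact absurd hΦeq (hne1 _ (hρmem _ hz))
    · rw [hΦJ _ hw, show Φ z.1 = 1 from if_neg hz] at hΦeq
      exact absurd hΦeq.symm (hne1 _ (hρmem _ hw))
    · rw [hclc z.1 z.2 hz, hclc w.1 w.2 hw]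
  have hFsurj : Function.Surjective F := by
    rintro ⟨z, hzs⟩
    have hzabs : ‖z‖ = 1 := by
      rw [mem_sphere_zero_iff_norm] at hzs
      exact hzs
    by_cases hz1 : z = 1
    · refine ⟨⟨c, hccl⟩, Subtype.ext ?_⟩
      show Φ c = z
      rw [hΦc, hz1]
    · obtain ⟨u, huIoo, huG⟩ := hGsurj z hzabs hz1
      refine ⟨⟨eMap h ⟨u, huIoo⟩, subset_closure (hmemJ ⟨u, huIoo⟩)⟩, Subtype.ext ?_⟩
      show Φ (eMap h ⟨u, huIoo⟩) = z
      rw [hΦJ _ (hmemJ ⟨u, huIoo⟩), hρe]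
      exact huG
  have hFcont : Continuous F := by
    apply Continuous.subtype_mk
    have : (fun z : ↥(closure J) => Φ z.1) = Set.domRestrict (closure J) Φ := rfl
    rw [this, ← continuousOn_iff_continuous_restrict]
    exact hΦcont
  exact ⟨Continuous.homeoOfEquivCompactToT2 (f := Equiv.ofBijective F ⟨hFinj, hFsurj⟩) hFcont⟩

end Subsingleton

end FreeArcAux


/-- For a maximal free open interval `J` of a Peano continuum with
`closure J ≠ X`, exactly one of the three types holds: (i) `closure J = J ∪ {a,b}`
is an arc with endpoints `a, b ∉ J` and at least one of `a, b` an endpoint of `X`;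
(ii) the same but neither `a` nor `b` is an endpoint of `X`; (iii)
`closure J = J ∪ {c}` is a circle for a single point `c ∉ J`. -/
theorem stmt_7 (X : Type*) [MetricSpace X] [CompactSpace X] [ConnectedSpace X]
    [LocallyConnectedSpace X]
    (J : Set X) (hJ : IsMaxFreeOpenInterval J) (hne : closure J ≠ Set.univ) :
    ((∃ a b : X, a ≠ b ∧ a ∉ J ∧ b ∉ J ∧ closure J = J ∪ {a, b} ∧
        IsArcEnds (closure J) a b ∧ (IsEndpointOf X a ∨ IsEndpointOf X b)) ∧
      ¬ (∃ a b : X, a ≠ b ∧ a ∉ J ∧ b ∉ J ∧ closure J = J ∪ {a, b} ∧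
        IsArcEnds (closure J) a b ∧ ¬ IsEndpointOf X a ∧ ¬ IsEndpointOf X b) ∧
      ¬ (∃ c : X, c ∉ J ∧ closure J = J ∪ {c} ∧ IsCircleSet (closure J))) ∨
    (¬ (∃ a b : X, a ≠ b ∧ a ∉ J ∧ b ∉ J ∧ closure J = J ∪ {a, b} ∧
        IsArcEnds (closure J) a b ∧ (IsEndpointOf X a ∨ IsEndpointOf X b)) ∧
      (∃ a b : X, a ≠ b ∧ a ∉ J ∧ b ∉ J ∧ closure J = J ∪ {a, b} ∧
        IsArcEnds (closure J) a b ∧ ¬ IsEndpointOf X a ∧ ¬ IsEndpointOf X b) ∧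
      ¬ (∃ c : X, c ∉ J ∧ closure J = J ∪ {c} ∧ IsCircleSet (closure J))) ∨
    (¬ (∃ a b : X, a ≠ b ∧ a ∉ J ∧ b ∉ J ∧ closure J = J ∪ {a, b} ∧
        IsArcEnds (closure J) a b ∧ (IsEndpointOf X a ∨ IsEndpointOf X b)) ∧
      ¬ (∃ a b : X, a ≠ b ∧ a ∉ J ∧ b ∉ J ∧ closure J = J ∪ {a, b} ∧
        IsArcEnds (closure J) a b ∧ ¬ IsEndpointOf X a ∧ ¬ IsEndpointOf X b) ∧
      (∃ c : X, c ∉ J ∧ closure J = J ∪ {c} ∧ IsCircleSet (closure J))) := by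
  classical
  obtain ⟨⟨hJo, ⟨h⟩⟩, -⟩ := hJ
  obtain ⟨a, haL⟩ := limSet_nonempty h
  obtain ⟨b, hbL⟩ := limSet_nonempty (h.trans flipIoo)
  have haEq : limSet h = {a} := (limSet_subsingleton hJo h).eq_singleton_of_mem haL
  have hbEq : limSet (h.trans flipIoo) = {b} :=
    (limSet_subsingleton hJo (h.trans flipIoo)).eq_singleton_of_mem hbL
  have haJ : a ∉ J := fun hc => limSet_disjoint hJo h hc haL
  have hbJ : b ∉ J := fun hc => limSet_disjoint hJo (h.trans flipIoo) hc hbL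
  have hacl : a ∈ closure J := limSet_subset_closure h haL
  have hbcl : b ∈ closure J := limSet_subset_closure (h.trans flipIoo) hbL
  have hdecomp := closure_decomp hJo h
  rw [haEq, hbEq] at hdecomp
  have hBd : ∀ x, x ∈ closure J → x ∉ J → x = a ∨ x = b := by
    intro x hx hxJ
    rcases hdecomp ▸ hx with (h' | h') | h'
    · exact absurd h' hxJ
    · exact Or.inl h'
    · exact Or.inr h'
  by_cases hab : a = b
  · -- circle case
    obtain rfl := hab
    right; right
    have hcircle : IsCircleSet (closure J) := circle_case hJo h haEq hbEq
    have hclJc : closure J = J ∪ {a} := by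
      rw [hdecomp, Set.union_assoc, Set.union_self]
    have hkill : ∀ a' b' : X, a' ≠ b' → a' ∉ J → b' ∉ J → closure J = J ∪ {a', b'} → False := by
      intro a' b' hne' ha' hb' heq'
      have h1 : a' = a := by
        refine (hBd a' ?_ ha').elim id id
        rw [heq']
        exact Set.mem_union_right _ (Set.mem_insert _ _)
      have h2 : b' = a := by
        refine (hBd b' ?_ hb').elim id id
        rw [heq']
        exact Set.mem_union_right _ (Set.mem_insert_of_mem _ rfl)
      exact hne' (h1.trans h2.symm)
    refine ⟨?_, ?_, ⟨a, haJ, hclJc, hcircle⟩⟩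
    · rintro ⟨a', b', hne', ha', hb', heq', -, -⟩
      exact hkill a' b' hne' ha' hb' heq'
    · rintro ⟨a', b', hne', ha', hb', heq', -, -⟩
      exact hkill a' b' hne' ha' hb' heq'
  · -- arc case
    obtain ⟨γ, hγc, hγi, hγim, hγ0, hγ1⟩ := arc_case hJo h haEq hbEq hab
    have hArc : IsArcEnds (closure J) a b := ⟨γ, hγc, hγi, hγim, hγ0, hγ1⟩
    have hclab : closure J = J ∪ {a, b} := by
      rw [hdecomp, Set.union_assoc, Set.singleton_union]
    have hnocircle : ¬ (∃ c : X, c ∉ J ∧ closure J = J ∪ {c} ∧ IsCircleSet (closure J)) := by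
      rintro ⟨c, hc, hceq, -⟩
      have h1 : a = c := by
        have h' := hacl
        rw [hceq] at h'
        rcases h' with h' | h'
        · exact absurd h' haJ
        · exact h'
      have h2 : b = c := by
        have h' := hbcl
        rw [hceq] at h'
        rcases h' with h' | h'
        · exact absurd h' hbJ
        · exact h'
      exact hab (h1.trans h2.symm)
    by_cases hE : IsEndpointOf X a ∨ IsEndpointOf X b
    · left
      refine ⟨⟨a, b, hab, haJ, hbJ, hclab, hArc, hE⟩, ?_, hnocircle⟩
      rintro ⟨a₂, b₂, hne₂, ha₂, hb₂, heq₂, -, hEa₂, hEb₂⟩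
      have hmem : ∀ x, x ∈ closure J → x ∉ J → x = a₂ ∨ x = b₂ := by
        intro x hx hxJ
        rcases heq₂ ▸ hx with h' | h'
        · exact absurd h' hxJ
        · simpa using h'
      rcases hE with hE | hE
      · rcases hmem a hacl haJ with h' | h' <;> rw [h'] at hE
        · exact hEa₂ hE
        · exact hEb₂ hE
      · rcases hmem b hbcl hbJ with h' | h' <;> rw [h'] at hE
        · exact hEa₂ hE
        · exact hEb₂ hE
    · right; left
      push_neg at hE
      refine ⟨?_, ⟨a, b, hab, haJ, hbJ, hclab, hArc, hE.1, hE.2⟩, hnocircle⟩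
      rintro ⟨a₁, b₁, hne₁, ha₁, hb₁, heq₁, -, hE₁⟩
      have h1 : a₁ = a ∨ a₁ = b := hBd a₁
        (by rw [heq₁]; exact Set.mem_union_right _ (Set.mem_insert _ _)) ha₁
      have h2 : b₁ = a ∨ b₁ = b := hBd b₁
        (by rw [heq₁]; exact Set.mem_union_right _ (Set.mem_insert_of_mem _ rfl)) hb₁
      rcases hE₁ with hE₁ | hE₁
      · rcases h1 with h' | h' <;> rw [h'] at hE₁
        · exact hE.1 hE₁
        · exact hE.2 hE₁
      · rcases h2 with h' | h' <;> rw [h'] at hE₁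
        · exact hE.1 hE₁
        · exact hE.2 hE₁
end

section
/- Let J be the open interval (0,1) and let X be a metric space. If f : J → X is a continuous open map (onto its image, i.e., f maps open subsets of J to sets open in f(J)), then f(J) contains no simple triod. -/
open Set Metric Topology

abbrev Sset : Set ℝ := {Real.pi / 3, Real.pi, 5 * Real.pi / 3}

lemma mem_triodModel' {θ : ℝ} (hθ : θ ∈ Sset)
    {r : ℝ} (hr : r ∈ Set.Icc (0:ℝ) 1) :
    (r : ℂ) * Complex.exp (θ * Complex.I) ∈ triodModel := by
  rw [triodModel, Set.mem_iUnion₂]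
  exact ⟨θ, hθ, ⟨r, hr, rfl⟩⟩

lemma theta_bounds {θ : ℝ} (hθ : θ ∈ Sset) :
    Real.pi / 3 ≤ θ ∧ θ ≤ 5 * Real.pi / 3 := by
  have hπ := Real.pi_pos
  rcases hθ with rfl | rfl | rfl <;> constructor <;> linarith

lemma triod_r_eq_zero {θ θ' : ℝ} (hθ : θ ∈ Sset) (hθ' : θ' ∈ Sset)
    (hne : θ ≠ θ') {r r' : ℝ}
    (hr : r ∈ Set.Icc (0:ℝ) 1) (hr' : r' ∈ Set.Icc (0:ℝ) 1)
    (h : (r : ℂ) * Complex.exp (θ * Complex.I) = (r' : ℂ) * Complex.exp (θ' * Complex.I)) :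
    r = 0 := by
  by_contra h0
  have hπ := Real.pi_pos
  have habs : r = r' := by
    have h2 := congrArg (fun z : ℂ => ‖z‖) h
    simpa [norm_mul, Complex.norm_exp_ofReal_mul_I, Complex.norm_real, Real.norm_eq_abs,
      abs_of_nonneg hr.1, abs_of_nonneg hr'.1] using h2
  rw [← habs] at h
  have hrne : (r : ℂ) ≠ 0 := by exact_mod_cast h0
  have hexp : Complex.exp (θ * Complex.I) = Complex.exp (θ' * Complex.I) :=
    mul_left_cancel₀ hrne h
  obtain ⟨n, hn⟩ := Complex.exp_eq_exp_iff_exists_int.mp hexp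
  have him := congrArg Complex.im hn
  simp [Complex.add_im, Complex.mul_im, Complex.mul_re, Complex.ofReal_im, Complex.ofReal_re,
    Complex.I_im, Complex.I_re, Complex.intCast_im, Complex.intCast_re] at him
  have hb := theta_bounds hθ
  have hb' := theta_bounds hθ'
  have hn0 : n ≠ 0 := by
    rintro rfl
    simp at him
    exact hne (by linarith)
  rcases lt_or_gt_of_ne hn0 with hlt | hgt
  · have h1 : n ≤ -1 := by omega
    have : (n : ℝ) ≤ -1 := by exact_mod_cast h1
    nlinarith
  · have : (1:ℝ) ≤ (n : ℝ) := by exact_mod_cast hgt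
    nlinarith

lemma zero_mem_triodModel : (0:ℂ) ∈ triodModel := by
  have hθ2 : Real.pi ∈ Sset := by simp
  simpa using mem_triodModel' hθ2 (Set.left_mem_Icc.mpr zero_le_one)

section Arm
variable {X : Type*} [TopologicalSpace X] {A : Set X}

/-- The base (branch) point of an embedded triod. -/
noncomputable def basePt (e : A ≃ₜ triodModel) : X := ((e.symm ⟨0, zero_mem_triodModel⟩ : A) : X)

/-- Parametrization of the arm of the embedded triod in direction `θ`. -/
noncomputable def armMap (e : A ≃ₜ triodModel) (θ : ℝ) (hθ : θ ∈ Sset) (r : Set.Icc (0:ℝ) 1) : X :=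
  ((e.symm ⟨((r : ℝ) : ℂ) * Complex.exp (θ * Complex.I), mem_triodModel' hθ r.2⟩ : A) : X)

lemma continuous_armMap (e : A ≃ₜ triodModel) (θ : ℝ) (hθ : θ ∈ Sset) :
    Continuous (armMap e θ hθ) := by
  apply continuous_subtype_val.comp
  apply e.symm.continuous.comp
  exact Continuous.subtype_mk
    ((Complex.continuous_ofReal.comp continuous_subtype_val).mul continuous_const) _

lemma armMap_mem (e : A ≃ₜ triodModel) (θ : ℝ) (hθ : θ ∈ Sset) (r : Set.Icc (0:ℝ) 1) :
    armMap e θ hθ r ∈ A := (e.symm _).2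

lemma basePt_mem (e : A ≃ₜ triodModel) : basePt e ∈ A := (e.symm _).2

lemma armMap_inj (e : A ≃ₜ triodModel) {θ : ℝ} {hθ : θ ∈ Sset} {θ' : ℝ} {hθ' : θ' ∈ Sset}
    {r r' : Set.Icc (0:ℝ) 1} (h : armMap e θ hθ r = armMap e θ' hθ' r') :
    ((r : ℝ) : ℂ) * Complex.exp (θ * Complex.I) = ((r' : ℝ) : ℂ) * Complex.exp (θ' * Complex.I) :=
  congrArg Subtype.val (e.symm.injective (Subtype.val_injective h))

lemma armMap_zero (e : A ≃ₜ triodModel) (θ : ℝ) (hθ : θ ∈ Sset) :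
    armMap e θ hθ ⟨0, Set.left_mem_Icc.mpr zero_le_one⟩ = basePt e := by
  unfold armMap basePt
  congr 1
  apply congrArg
  exact Subtype.ext (by simp)

lemma armMap_one_ne (e : A ≃ₜ triodModel) (θ : ℝ) (hθ : θ ∈ Sset) :
    armMap e θ hθ ⟨1, Set.right_mem_Icc.mpr zero_le_one⟩ ≠ basePt e := by
  intro h
  rw [← armMap_zero e θ hθ] at h
  have h2 := armMap_inj e h
  simp [Complex.exp_ne_zero] at h2

lemma armMap_cross (e : A ≃ₜ triodModel) {θ : ℝ} (hθ : θ ∈ Sset) {θ' : ℝ} (hθ' : θ' ∈ Sset)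
    (hne : θ ≠ θ') {r r' : Set.Icc (0:ℝ) 1} (h : armMap e θ hθ r = armMap e θ' hθ' r') :
    armMap e θ hθ r = basePt e := by
  have h2 := armMap_inj e h
  have hr0 : (r : ℝ) = 0 := triod_r_eq_zero hθ hθ' hne r.2 r'.2 h2
  have hr : r = ⟨0, Set.left_mem_Icc.mpr zero_le_one⟩ := Subtype.ext hr0
  rw [hr, armMap_zero]

end Arm

/-- If `f : (0,1) → X` is continuous and open onto its image,
then `f((0,1))` contains no simple triod. -/
theorem stmt_8 (X : Type*) [MetricSpace X]
    (f : Set.Ioo (0:ℝ) 1 → X) (hc : Continuous f)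
    (hopen : ∀ U : Set (Set.Ioo (0:ℝ) 1), IsOpen U →
      ∃ W : Set X, IsOpen W ∧ f '' U = W ∩ Set.range f) :
    ContainsNoTriod (Set.range f) := by
  intro A hA hT
  obtain ⟨e⟩ := hT
  have hπ := Real.pi_pos
  have hθ1 : Real.pi / 3 ∈ Sset := by simp
  have hθ2 : Real.pi ∈ Sset := by simp
  have hθ3 : 5 * Real.pi / 3 ∈ Sset := by simp
  have hne12 : Real.pi / 3 ≠ Real.pi := by intro h; linarith
  have hne13 : Real.pi / 3 ≠ 5 * Real.pi / 3 := by intro h; linarith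
  have hne23 : Real.pi ≠ 5 * Real.pi / 3 := by intro h; linarith
  set b : X := basePt e with hbdef
  have hbA : b ∈ A := basePt_mem e
  set one01 : Set.Icc (0:ℝ) 1 := ⟨1, Set.right_mem_Icc.mpr zero_le_one⟩ with hone
  -- choose ε smaller than the distance from b to each arm tip
  obtain ⟨ε, hε0, hεlt⟩ : ∃ ε > 0, ∀ θ (hθ : θ ∈ Sset), ε < dist b (armMap e θ hθ one01) := by
    have d1 : 0 < dist b (armMap e _ hθ1 one01) :=
      dist_pos.mpr fun h => armMap_one_ne e _ hθ1 h.symm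
    have d2 : 0 < dist b (armMap e _ hθ2 one01) :=
      dist_pos.mpr fun h => armMap_one_ne e _ hθ2 h.symm
    have d3 : 0 < dist b (armMap e _ hθ3 one01) :=
      dist_pos.mpr fun h => armMap_one_ne e _ hθ3 h.symm
    refine ⟨min (min (dist b (armMap e _ hθ1 one01)) (dist b (armMap e _ hθ2 one01)))
      (dist b (armMap e _ hθ3 one01)) / 2, by positivity, ?_⟩
    intro θ hθ
    have hmin1 := min_le_left (min (dist b (armMap e _ hθ1 one01)) (dist b (armMap e _ hθ2 one01)))
      (dist b (armMap e _ hθ3 one01))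
    have hmin2 := min_le_right (min (dist b (armMap e _ hθ1 one01)) (dist b (armMap e _ hθ2 one01)))
      (dist b (armMap e _ hθ3 one01))
    have hmin3 := min_le_left (dist b (armMap e _ hθ1 one01)) (dist b (armMap e _ hθ2 one01))
    have hmin4 := min_le_right (dist b (armMap e _ hθ1 one01)) (dist b (armMap e _ hθ2 one01))
    obtain h | h | h : θ = Real.pi / 3 ∨ θ = Real.pi ∨ θ = 5 * Real.pi / 3 := by
      simpa using hθ
    · subst h
      have heq : armMap e _ hθ one01 = armMap e _ hθ1 one01 := rfl
      rw [heq]; linarith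
    · subst h
      have heq : armMap e _ hθ one01 = armMap e _ hθ2 one01 := rfl
      rw [heq]; linarith
    · subst h
      have heq : armMap e _ hθ one01 = armMap e _ hθ3 one01 := rfl
      rw [heq]; linarith
  -- a fiber point over b and a small tube around it
  obtain ⟨t0, ht0⟩ := hA hbA
  obtain ⟨δ, hδ0, hδ⟩ := Metric.continuousAt_iff.mp hc.continuousAt ε hε0
  set a0 : ℝ := (t0 : ℝ) with ha0
  have ht0m : (0:ℝ) < a0 ∧ a0 < 1 := ⟨t0.2.1, t0.2.2⟩
  set δ' : ℝ := min (δ/2) (min (a0/2) ((1-a0)/2)) with hδ'def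
  have hδ'0 : 0 < δ' := by
    apply lt_min (by linarith)
    exact lt_min (by linarith [ht0m.1]) (by linarith [ht0m.2])
  have hδ'a : δ' ≤ a0/2 := le_trans (min_le_right _ _) (min_le_left _ _)
  have hδ'b : δ' ≤ (1-a0)/2 := le_trans (min_le_right _ _) (min_le_right _ _)
  have hδ'δ : δ' < δ := lt_of_le_of_lt (min_le_left _ _) (by linarith)
  have hl0 : (0:ℝ) < a0 - δ' := by linarith [ht0m.1]
  have hr1 : a0 + δ' < 1 := by linarith [ht0m.2]
  set K : Set (Set.Ioo (0:ℝ) 1) := Subtype.val ⁻¹' (Set.Icc (a0 - δ') (a0 + δ')) with hKdef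
  set J0 : Set (Set.Ioo (0:ℝ) 1) := Subtype.val ⁻¹' (Set.Ioo (a0 - δ') (a0 + δ')) with hJ0def
  have hJ0open : IsOpen J0 := isOpen_Ioo.preimage continuous_subtype_val
  have ht0J0 : t0 ∈ J0 := by
    constructor <;> [skip; skip] <;> simp only [ha0] <;> linarith
  have hJ0K : J0 ⊆ K := fun s hs => Set.Ioo_subset_Icc_self hs
  have hKcompact : IsCompact K := by
    rw [Topology.IsEmbedding.subtypeVal.isCompact_iff]
    rw [Subtype.image_preimage_coe]
    rw [Set.inter_eq_self_of_subset_right (Set.Icc_subset_Ioo hl0 hr1)]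
    exact isCompact_Icc
  set U : Set X := f '' J0 with hUdef
  obtain ⟨W, hWopen, hWU⟩ := hopen J0 hJ0open
  have hbU : b ∈ U := ⟨t0, ht0J0, ht0⟩
  have hKball : f '' K ⊆ Metric.ball b ε := by
    rintro _ ⟨s, hs, rfl⟩
    have hd : dist s t0 < δ := by
      rw [Subtype.dist_eq, Real.dist_eq, abs_sub_lt_iff]
      exact ⟨by linarith [hs.2], by linarith [hs.1]⟩
    have h2 := hδ hd
    rw [ht0] at h2
    exact Metric.mem_ball.mpr h2
  have hclU : closure U ⊆ f '' K :=
    closure_minimal (Set.image_mono hJ0K) (hKcompact.image hc).isClosed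
  set l : Set.Ioo (0:ℝ) 1 := ⟨a0 - δ', ⟨hl0, by linarith [ht0m.2]⟩⟩ with hldef
  set r : Set.Ioo (0:ℝ) 1 := ⟨a0 + δ', ⟨by linarith [ht0m.1], hr1⟩⟩ with hrdef
  have hfrontier : ∀ w, w ∈ closure U → w ∉ U → w = f l ∨ w = f r := by
    intro w hw hwU
    obtain ⟨s, hs, rfl⟩ := hclU hw
    have hsJ0 : s ∉ J0 := fun h => hwU ⟨s, h, rfl⟩
    have hends : (s:ℝ) = a0 - δ' ∨ (s:ℝ) = a0 + δ' := by
      by_contra hcon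
      push_neg at hcon
      exact hsJ0 ⟨lt_of_le_of_ne hs.1 (Ne.symm hcon.1), lt_of_le_of_ne hs.2 hcon.2⟩
    rcases hends with h | h
    · exact Or.inl (congrArg f (Subtype.ext h))
    · exact Or.inr (congrArg f (Subtype.ext h))
  -- each arm must exit through the (at most two-point) boundary of U
  have hmeet : ∀ θ (hθ : θ ∈ Sset),
      ∃ w, w ∈ Set.range (armMap e θ hθ) ∧ w ∈ closure U ∧ w ∉ U := by
    intro θ hθ
    by_contra hcon
    push_neg at hcon
    have hpre : IsPreconnected (Set.range (armMap e θ hθ)) :=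
      isPreconnected_range (continuous_armMap e θ hθ)
    have hcover : Set.range (armMap e θ hθ) ⊆ W ∪ (closure U)ᶜ := by
      intro x hx
      by_cases hxc : x ∈ closure U
      · have hxU : x ∈ U := hcon x hx hxc
        rw [hUdef, hWU] at hxU
        exact Or.inl hxU.1
      · exact Or.inr hxc
    have hbW : b ∈ W := by
      have := hbU
      rw [hUdef, hWU] at this
      exact this.1
    have hb' : (Set.range (armMap e θ hθ) ∩ W).Nonempty :=
      ⟨b, ⟨_, armMap_zero e θ hθ⟩, hbW⟩
    have hp' : (Set.range (armMap e θ hθ) ∩ (closure U)ᶜ).Nonempty := by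
      refine ⟨armMap e θ hθ one01, ⟨_, rfl⟩, fun hmem => ?_⟩
      have h1 := hKball (hclU hmem)
      rw [Metric.mem_ball, dist_comm] at h1
      linarith [hεlt θ hθ]
    obtain ⟨x, hxr, hxW, hxc⟩ := hpre W (closure U)ᶜ hWopen isClosed_closure.isOpen_compl
      hcover hb' hp'
    have hxf : x ∈ Set.range f := by
      obtain ⟨r0, hr0⟩ := hxr
      exact hA (hr0 ▸ armMap_mem e θ hθ r0)
    have hxU : x ∈ U := by
      rw [hUdef, hWU]
      exact ⟨hxW, hxf⟩
    exact hxc (subset_closure hxU)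
  obtain ⟨w1, hw1g, hw1c, hw1U⟩ := hmeet _ hθ1
  obtain ⟨w2, hw2g, hw2c, hw2U⟩ := hmeet _ hθ2
  obtain ⟨w3, hw3g, hw3c, hw3U⟩ := hmeet _ hθ3
  have hkey : ∀ θ (hθ : θ ∈ Sset) θ' (hθ' : θ' ∈ Sset), θ ≠ θ' → ∀ w,
      w ∈ Set.range (armMap e θ hθ) → w ∈ Set.range (armMap e θ' hθ') → w ∉ U → False := by
    rintro θ hθ θ' hθ' hne w ⟨r0, hr0⟩ ⟨r1, hr1⟩ hwU
    have hb2 : w = b := by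
      rw [← hr0]
      exact armMap_cross e hθ hθ' hne (by rw [hr0, hr1])
    exact hwU (hb2 ▸ hbU)
  rcases hfrontier w1 hw1c hw1U with h1 | h1 <;>
    rcases hfrontier w2 hw2c hw2U with h2 | h2 <;>
      rcases hfrontier w3 hw3c hw3U with h3 | h3
  · exact hkey _ hθ1 _ hθ2 hne12 w1 hw1g ((h1.trans h2.symm) ▸ hw2g) hw1U
  · exact hkey _ hθ1 _ hθ2 hne12 w1 hw1g ((h1.trans h2.symm) ▸ hw2g) hw1U
  · exact hkey _ hθ1 _ hθ3 hne13 w1 hw1g ((h1.trans h3.symm) ▸ hw3g) hw1U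
  · exact hkey _ hθ2 _ hθ3 hne23 w2 hw2g ((h2.trans h3.symm) ▸ hw3g) hw2U
  · exact hkey _ hθ2 _ hθ3 hne23 w2 hw2g ((h2.trans h3.symm) ▸ hw3g) hw2U
  · exact hkey _ hθ1 _ hθ3 hne13 w1 hw1g ((h1.trans h3.symm) ▸ hw3g) hw1U
  · exact hkey _ hθ1 _ hθ2 hne12 w1 hw1g ((h1.trans h2.symm) ▸ hw2g) hw1U
  · exact hkey _ hθ1 _ hθ2 hne12 w1 hw1g ((h1.trans h2.symm) ▸ hw2g) hw1U
end

section
/- Let X be a continuum and let f : X → X be a continuous open map. If a is an endpoint of X, then f(a) is also an endpoint of X. -/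
open Set Metric Topology

/-- A continuous open self-map of a continuum sends endpoints of
the space to endpoints of the space. -/
theorem stmt_9 (X : Type*) [MetricSpace X] [CompactSpace X] [ConnectedSpace X]
    (f : X → X) (hc : Continuous f) (ho : IsOpenMap f)
    (a : X) (ha : IsEndpointOf X a) :
    IsEndpointOf X (f a) := by
  rcases subsingleton_or_nontrivial X with hs | hn
  · -- subsingleton: ha is contradictory
    exfalso
    obtain ⟨V, hVo, haV, -, y, hfr⟩ := ha univ isOpen_univ (mem_univ a)
    have hVuniv : V = univ := Subsingleton.eq_univ_of_nonempty ⟨a, haV⟩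
    rw [hVuniv, frontier_univ] at hfr
    exact (singleton_ne_empty y) hfr.symm
  · intro U hU hfa
    obtain ⟨z, hz⟩ := exists_ne (f a)
    obtain ⟨r, hr, hrU⟩ := Metric.isOpen_iff.mp hU (f a) hfa
    set ε : ℝ := min r (dist z (f a)) with hε
    have hεpos : 0 < ε := lt_min hr (dist_pos.mpr hz)
    have hzball : z ∉ ball (f a) ε := by
      simp only [mem_ball, not_lt]
      exact min_le_right _ _
    have hballU : ball (f a) ε ⊆ U :=
      (ball_subset_ball (min_le_left _ _)).trans hrU
    obtain ⟨V, hVo, haV, hVsub, y, hfr⟩ :=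
      ha (f ⁻¹' ball (f a) ε) (isOpen_ball.preimage hc)
        (by simp [mem_ball, hεpos])
    refine ⟨f '' V, ho V hVo, ⟨a, haV, rfl⟩, (image_subset_iff.mpr hVsub).trans hballU,
      f y, ?_⟩
    have hWo : IsOpen (f '' V) := ho V hVo
    have hclV : closure V ⊆ V ∪ {y} := by
      have : closure V ⊆ V ∪ frontier V := by
        intro x hx
        by_cases hxV : x ∈ V
        · exact Or.inl hxV
        · exact Or.inr ⟨hx, fun h => hxV (hVo.interior_eq ▸ h)⟩
      rwa [hfr] at this
    have hclW : closure (f '' V) ⊆ f '' V ∪ {f y} := by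
      have h1 : closure (f '' V) ⊆ f '' closure V :=
        closure_minimal (image_mono (f := f) subset_closure)
          ((isClosed_closure.isCompact.image hc).isClosed)
      refine h1.trans ?_
      intro w ⟨x, hx, hxw⟩
      rcases hclV hx with h | h
      · exact Or.inl ⟨x, h, hxw⟩
      · exact Or.inr (by simp_all)
    have hsub : frontier (f '' V) ⊆ {f y} := by
      rw [hWo.frontier_eq]
      intro w ⟨hw1, hw2⟩
      rcases hclW hw1 with h | h
      · exact absurd h hw2
      · exact h
    have hne : (frontier (f '' V)).Nonempty := by
      rw [nonempty_frontier_iff]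
      refine ⟨⟨f a, a, haV, rfl⟩, fun h => hzball ?_⟩
      have : z ∈ f '' V := h ▸ mem_univ z
      exact image_subset_iff.mpr hVsub this
    exact (Nonempty.subset_singleton_iff hne).mp hsub
end

section
/- Let X be a Peano continuum having a free arc, which is neither an arc nor a circle, let F be a commutative subsemigroup of C^0(X) consisting of continuous open maps, and let f_1, …, f_m ∈ F. Let A be a free arc contained in a maximal free open interval J such that A is a jumping arc of {f_1, …, f_m} and A, f_1(A), …, f_m(A) are all contained in J. If g ∈ F restricts to an injective map on J, then g(A) is also a jumping arc of {f_1, …, f_m}. -/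
open Set Metric Topology

theorem IsArc.image_of_injOn {X Y : Type*} [TopologicalSpace X] [TopologicalSpace Y] [T2Space Y]
    {A : Set X} {g : X → Y} (hA : IsArc A) (hg : ContinuousOn g A) (hinj : InjOn g A) :
    IsArc (g '' A) := by
  obtain ⟨e⟩ := hA
  have : CompactSpace A := e.symm.compactSpace
  have hcont : Continuous (Equiv.Set.imageOfInjOn g A hinj) :=
    hg.domRestrict.subtype_mk _
  exact ⟨hcont.homeoOfEquivCompactToT2.symm.trans e⟩

theorem Set.InjOn.image_inter_image_image_eq_empty_of_commute {X : Type*} {f g : X → X}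
    {A J : Set X} (hg : InjOn g J) (hfg : Function.Commute f g) (hAJ : A ⊆ J)
    (hfAJ : f '' A ⊆ J) (hjump : A ∩ f '' A = ∅) :
    g '' A ∩ f '' (g '' A) = ∅ := by
  rw [hfg.set_image A, ← hg.image_inter hAJ hfAJ, hjump, image_empty]

theorem stmt_14_general (X : Type*) [MetricSpace X]
    (F : Set (X → X))
    (hcont : ∀ f ∈ F, Continuous f)
    (hcomm : ∀ f ∈ F, ∀ g ∈ F, f ∘ g = g ∘ f)
    (m : ℕ) (f : Fin m → X → X) (hf : ∀ j, f j ∈ F)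
    (A J : Set X)
    (hA : IsFreeArc A) (hAJ : A ⊆ J)
    (hjump : ∀ j : Fin m, A ∩ (f j '' A) = ∅)
    (hfAJ : ∀ j : Fin m, f j '' A ⊆ J)
    (g : X → X) (hg : g ∈ F) (hginj : Set.InjOn g J) :
    IsArc (g '' A) ∧ ∀ j : Fin m, (g '' A) ∩ (f j '' (g '' A)) = ∅ := by
  obtain ⟨-, -, -, hArc⟩ := hA
  refine ⟨hArc.image_of_injOn (hcont g hg).continuousOn (hginj.mono hAJ), fun j => ?_⟩
  exact hginj.image_inter_image_image_eq_empty_of_commute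
    (congrFun (hcomm (f j) (hf j) g hg)) hAJ (hfAJ j) (hjump j)

/-- Claim B: If `A` is a free arc in a maximal free open interval
`J`, `A` is a jumping arc of `{f₁,…,f_m} ⊆ F`, `A, f₁(A),…,f_m(A) ⊆ J`, and
`g ∈ F` is injective on `J`, then `g(A)` is also a jumping arc of `{f₁,…,f_m}`. -/
theorem stmt_14 (X : Type*) [MetricSpace X] [CompactSpace X] [ConnectedSpace X]
    [LocallyConnectedSpace X]
    (hfree : ∃ A : Set X, IsFreeArc A)
    (harc : ¬ SpaceIsArc X) (hcirc : ¬ SpaceIsCircle X)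
    (F : Set (X → X))
    (hcont : ∀ f ∈ F, Continuous f)
    (hopen : ∀ f ∈ F, IsOpenMap f)
    (hsemi : ∀ f ∈ F, ∀ g ∈ F, f ∘ g ∈ F)
    (hcomm : ∀ f ∈ F, ∀ g ∈ F, f ∘ g = g ∘ f)
    (m : ℕ) (f : Fin m → X → X) (hf : ∀ j, f j ∈ F)
    (A J : Set X) (hJ : IsMaxFreeOpenInterval J)
    (hA : IsFreeArc A) (hAJ : A ⊆ J)
    (hjump : ∀ j : Fin m, A ∩ (f j '' A) = ∅)
    (hfAJ : ∀ j : Fin m, f j '' A ⊆ J)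
    (g : X → X) (hg : g ∈ F) (hginj : Set.InjOn g J) :
    IsArc (g '' A) ∧ ∀ j : Fin m, (g '' A) ∩ (f j '' (g '' A)) = ∅ :=
  stmt_14_general X F hcont hcomm m f hf A J hA hAJ hjump hfAJ g hg hginj
end
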